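/- Let w = (w_k, k ≥ 0) be a weight sequence with w_0 > 0 and w_k > 0 for some k ≥ 2, and suppose the radius of convergence ρ of Φ(z) = Σ_{k≥0} w_k·z^k equals 0. Whenever Z_n(w) > 0, let 𝒯_n be a simply generated tree with weight sequence w and size n. Then for every ε > 0, P(n_{𝒯_n}(0)/n < 1 − ε) = oe(1); that is, with very high probability 𝒯_n has at least (1−ε)n leaves. -/

import Mathlib

open scoped ENNReal NNReal BigOperators
open MeasureTheory ProbabilityTheory

/-- A plane tree: a finite rooted tree with ordered children. -/
inductive PlaneTree : Type where
  | node : List PlaneTree → PlaneTree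

namespace PlaneTree

/-- The list of root subtrees of a plane tree. -/
def children : PlaneTree → List PlaneTree
  | node l => l

/-- The number of vertices of a plane tree. -/
def size : PlaneTree → ℕ
  | node l => 1 + (l.attach.map fun c => size c.1).sum
decreasing_by
  simp only [node.sizeOf_spec]
  have := List.sizeOf_lt_of_mem c.2
  omega

/-- The height of a plane tree: the maximal graph distance from the root to a vertex. -/
def height : PlaneTree → ℕ
  | node l => (l.attach.map fun c => height c.1 + 1).foldr max 0
decreasing_by
  simp only [node.sizeOf_spec]
  have := List.sizeOf_lt_of_mem c.2
  omega

/-- The number of vertices of a plane tree at distance `k` from the root. -/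
def levelCount : PlaneTree → ℕ → ℕ
  | _, 0 => 1
  | node l, k + 1 => (l.attach.map fun c => levelCount c.1 k).sum
termination_by t _ => sizeOf t
decreasing_by
  simp only [node.sizeOf_spec]
  have := List.sizeOf_lt_of_mem c.2
  omega

/-- The width of a plane tree: the maximal number of vertices on a single level. -/
def width (t : PlaneTree) : ℕ :=
  (Finset.range (t.height + 1)).sup t.levelCount

/-- The number of vertices of a plane tree having exactly `c` children. -/
def degCount : PlaneTree → ℕ → ℕ
  | node l, c => (if l.length = c then 1 else 0) + (l.attach.map fun s => degCount s.1 c).sum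
termination_by t _ => sizeOf t
decreasing_by
  simp only [node.sizeOf_spec]
  have := List.sizeOf_lt_of_mem s.2
  omega

/-- The sum over all vertices `v` of `(deg v)^2`, i.e. `|n_t|_2^2`. -/
def sumDegSq : PlaneTree → ℕ
  | node l => l.length ^ 2 + (l.attach.map fun c => sumDegSq c.1).sum
decreasing_by
  simp only [node.sizeOf_spec]
  have := List.sizeOf_lt_of_mem c.2
  omega

/-- The subtree of a plane tree rooted at the vertex reached by following the path `p`
(at each step, `i` means "move to the `i`-th child"), if that vertex exists. -/
def subtreeAt : List ℕ → PlaneTree → Option PlaneTree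
  | [], t => some t
  | i :: p, node l => l[i]?.bind (subtreeAt p)

/-- `v : List ℕ` encodes a vertex of the plane tree `t` (the root is `[]`, and the height of
a vertex is the length of its path). -/
def IsVertex (t : PlaneTree) (v : List ℕ) : Prop :=
  subtreeAt v t ≠ none

/-- The number of children of the vertex `v` of `t` (junk value `0` if `v` is not a vertex). -/
def degAt (t : PlaneTree) (v : List ℕ) : ℕ :=
  match subtreeAt v t with
  | some s => s.children.length
  | none => 0

end PlaneTree

/-- `n` is the degree statistics sequence of some plane tree: `Σ_c n(c) = 1 + Σ_c c·n(c)`. -/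
def IsDegStats (n : ℕ →₀ ℕ) : Prop :=
  n.sum (fun _ m => m) = 1 + n.sum (fun c m => c * m)

/-- `|n|_1 = Σ_c c·n(c)`. -/
def dsNorm1 (n : ℕ →₀ ℕ) : ℕ := n.sum fun c m => c * m

/-- `|n|_2² = Σ_c c²·n(c)`. -/
def dsNorm2Sq (n : ℕ →₀ ℕ) : ℕ := n.sum fun c m => c ^ 2 * m

/-- The set `𝒯_n^•` of marked plane trees `(t,v)` with degree statistics `n`. -/
def markedTrees (n : ℕ →₀ ℕ) : Set (PlaneTree × List ℕ) :=
  {tv | (∀ c, tv.1.degCount c = n c) ∧ tv.1.IsVertex tv.2}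


/-- The weight of a plane tree with respect to a weight sequence `w`:
`w(t) = ∏_{v ∈ t} w(deg_t(v))`. -/
noncomputable def treeWeight (w : ℕ → ℝ) : PlaneTree → ℝ
  | .node l => w l.length * (l.attach.map fun c => treeWeight w c.1).prod
decreasing_by
  simp only [PlaneTree.node.sizeOf_spec]
  have := List.sizeOf_lt_of_mem c.2
  omega

/-- The partition function `Z_n(w) = Σ_{plane trees t with n vertices} w(t)`. -/
noncomputable def Zn (w : ℕ → ℝ) (n : ℕ) : ℝ :=
  ∑' t : {t : PlaneTree // t.size = n}, treeWeight w t

/-- The probability that the simply generated tree of size `n` with weight sequence `w`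
(for offspring distributions `w`, the Bienaymé tree conditioned to have `n` vertices)
belongs to the set `E`. -/
noncomputable def sgProb (w : ℕ → ℝ) (n : ℕ) (E : Set PlaneTree) : ℝ :=
  (∑' t : {t : PlaneTree // t.size = n ∧ t ∈ E}, treeWeight w t) / Zn w n

/-- The expectation of `f` applied to the simply generated tree of size `n` with weight
sequence `w`. -/
noncomputable def sgExp (w : ℕ → ℝ) (n : ℕ) (f : PlaneTree → ℝ) : ℝ :=
  (∑' t : {t : PlaneTree // t.size = n}, treeWeight w t * f t) / Zn w n

/-- The probability that `(T_n, V_n) ∈ E`, where `T_n` is the simply generated tree of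
size `n` with weight sequence `w` and, given `T_n`, `V_n` is a uniformly random
vertex of `T_n` (a tree with `n` vertices has exactly `n` vertex paths). -/
noncomputable def sgMarkedProb (w : ℕ → ℝ) (n : ℕ) (E : Set (PlaneTree × List ℕ)) : ℝ :=
  (∑' tv : {tv : PlaneTree × List ℕ //
      tv.1.size = n ∧ tv.1.IsVertex tv.2 ∧ tv ∈ E}, treeWeight w (tv : _).1.1) /
    (n * Zn w n)

/-- The expectation of `f (T_n, V_n)`, where `T_n` is the simply generated tree of size `n`
with weight sequence `w` and, given `T_n`, `V_n` is a uniformly random vertex of `T_n`. -/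
noncomputable def sgMarkedExp (w : ℕ → ℝ) (n : ℕ) (f : PlaneTree × List ℕ → ℝ) : ℝ :=
  (∑' tv : {tv : PlaneTree × List ℕ // tv.1.size = n ∧ tv.1.IsVertex tv.2},
      treeWeight w (tv : _).1.1 * f tv) / (n * Zn w n)

/-- `Φ_w(t) = Σ_k w_k t^k`, valued in `ℝ≥0∞`. -/
noncomputable def sgPhi (w : ℕ → ℝ) (t : ℝ) : ℝ≥0∞ :=
  ∑' k : ℕ, ENNReal.ofReal (w k * t ^ k)

/-- The radius of convergence `ρ` of `Φ_w` (for a non-negative weight sequence). -/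
noncomputable def sgRho (w : ℕ → ℝ) : ℝ≥0∞ :=
  ⨆ (t : ℝ≥0) (_ : sgPhi w t < ⊤), (t : ℝ≥0∞)

/-- `Ψ_w(t) = t Φ_w'(t) / Φ_w(t) = (Σ_k k w_k t^k) / (Σ_k w_k t^k)`, valued in `ℝ≥0∞`. -/
noncomputable def sgPsi (w : ℕ → ℝ) (t : ℝ) : ℝ≥0∞ :=
  (∑' k : ℕ, ENNReal.ofReal (k * w k * t ^ k)) / sgPhi w t

/-- `ν = Ψ_w(ρ) = lim_{t ↑ ρ} Ψ_w(t)`, which (as `Ψ_w` is non-decreasing on `[0,ρ)`)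
equals the supremum of `Ψ_w(t)` over `t < ρ`; it equals `0` when `ρ = 0`. -/
noncomputable def sgNu (w : ℕ → ℝ) : ℝ≥0∞ :=
  ⨆ (t : ℝ≥0) (_ : (t : ℝ≥0∞) < sgRho w), sgPsi w (t : ℝ)

/-- `σ² = ρ Ψ_w'(ρ)`: when `ν ≤ 1` this is the variance
`(Σ_k k² w_k ρ^k)/Φ_w(ρ) − ν²` of the probability distribution `π(k) = w_k ρ^k / Φ_w(ρ)`. -/
noncomputable def sgSigmaSq (w : ℕ → ℝ) : ℝ≥0∞ :=
  (∑' k : ℕ, ENNReal.ofReal ((k : ℝ) ^ 2 * w k * (sgRho w).toReal ^ k)) /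
      sgPhi w (sgRho w).toReal - (sgNu w) ^ 2

/-!
If `ρ = 0` then, for every `A`, `w_K ≥ A^K` for infinitely many `K`. In a tree with `n` vertices
and fewer than `(1 - ε) n` leaves, at most `n / C` vertices have more than `C` children, so for
`C ≥ 2 / ε` some degree `1 ≤ d ≤ C` occurs at least `ε n / (2 C)` times. Replacing blocks of `K`
vertices of degree `d` by `d` vertices of degree `K` and `K - d` leaves keeps the numbers of
vertices and of edges, so the new degree multiset is that of some tree (a caterpillar); for a large
`K` with `w_K ≥ A^K` this multiplies the weight by at least `Q^n`. As there are at most `4^n` plane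
trees with `n` vertices, the trees with few leaves carry at most a fraction `(4 / Q)^n` of
`Z_n(w)`; take `Q = 4e`.
-/

open Filter

namespace PlaneTree

@[elab_as_elim]
theorem induction {P : PlaneTree → Prop} (node : ∀ l, (∀ s ∈ l, P s) → P (.node l)) :
    ∀ t, P t
  | .node l => node l fun s _ => induction node s

theorem size_node (l : List PlaneTree) : (node l).size = 1 + (l.map size).sum := by
  simp [size]

theorem degCount_node (l : List PlaneTree) (c : ℕ) :
    (node l).degCount c = (if l.length = c then 1 else 0) + (l.map (degCount · c)).sum := by
  simp [degCount]

def degrees : PlaneTree → Multiset ℕ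
  | node l => l.length ::ₘ (l.map degrees).sum

theorem card_degrees (t : PlaneTree) : Multiset.card t.degrees = t.size := by
  induction t using induction with
  | node l ih =>
    rw [degrees, size_node, List.map_congr_left fun s hs => (ih s hs).symm]
    clear ih
    induction l with
    | nil => simp
    | cons s l ihl => simp at ihl ⊢; omega

theorem sum_degrees (t : PlaneTree) : t.degrees.sum + 1 = t.size := by
  induction t using induction with
  | node l ih =>
    rw [degrees, size_node, List.map_congr_left fun s hs => (ih s hs).symm]
    clear ih
    induction l with
    | nil => simp
    | cons s l ihl => simp at ihl ⊢; omega

theorem count_degrees (t : PlaneTree) (c : ℕ) : t.degrees.count c = t.degCount c := by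
  induction t using induction with
  | node l ih =>
    have hsum := map_list_sum (Multiset.countAddMonoidHom c) (l.map degrees)
    simp only [Multiset.coe_countAddMonoidHom, List.map_map, Function.comp_def] at hsum
    rw [degrees, degCount_node, Multiset.count_cons, hsum, List.map_congr_left ih]
    split_ifs <;> omega

def caterpillar : List ℕ → PlaneTree
  | [] => node []
  | d :: L => node (caterpillar L :: List.replicate (d - 1) (node []))

theorem degrees_caterpillar (L : List ℕ) (hL : ∀ d ∈ L, d ≠ 0) :
    (caterpillar L).degrees = (L : Multiset ℕ) + Multiset.replicate (L.sum + 1 - L.length) 0 := by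
  induction L with
  | nil => simp [caterpillar, degrees]
  | cons d L ih =>
    have hd : d ≠ 0 := hL d List.mem_cons_self
    have hlen : L.length ≤ L.sum := by
      simpa using List.length_le_sum_of_one_le L fun x hx =>
        Nat.one_le_iff_ne_zero.2 (hL x (List.mem_cons_of_mem _ hx))
    have hleaf : (node []).degrees = {0} := by simp [degrees]
    rw [caterpillar, degrees, List.map_cons, List.sum_cons,
      ih fun x hx => hL x (List.mem_cons_of_mem _ hx)]
    simp only [List.length_cons, List.length_replicate, List.map_replicate,
      List.sum_replicate, hleaf, Multiset.nsmul_singleton]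
    rw [Nat.sub_add_cancel (Nat.one_le_iff_ne_zero.2 hd), add_assoc, ← Multiset.replicate_add,
      ← Multiset.cons_coe, Multiset.cons_add, List.sum_cons]
    congr 3
    omega

theorem exists_degrees_eq (D : Multiset ℕ) (hD : D.sum + 1 = Multiset.card D) :
    ∃ t : PlaneTree, t.degrees = D := by
  classical
  have hsplit : D.filter (· = 0) + D.filter (· ≠ 0) = D := Multiset.filter_add_not _ D
  have hP : ∀ d ∈ D.filter (· ≠ 0), d ≠ 0 := fun d hd => (Multiset.mem_filter.1 hd).2
  rw [Multiset.filter_eq' D 0] at hsplit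
  generalize D.filter (· ≠ 0) = P at hsplit hP
  have hsum : P.sum = D.sum := by simpa using congrArg Multiset.sum hsplit
  have hcard : D.count 0 + Multiset.card P = Multiset.card D := by
    simpa using congrArg Multiset.card hsplit
  refine ⟨caterpillar P.toList, ?_⟩
  rw [degrees_caterpillar _ fun d hd => hP d (Multiset.mem_toList.1 hd), Multiset.coe_toList,
    Multiset.sum_toList, Multiset.length_toList, hsum, add_comm]
  convert hsplit using 3
  omega

/-- The Dyck path of the contour walk: `true` for a step down an edge, `false` for a step up. -/
def encode : PlaneTree → List Bool
  | node l => true :: ((l.map encode).flatten ++ [false])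

theorem length_encode (t : PlaneTree) : t.encode.length = 2 * t.size := by
  induction t using induction with
  | node l ih =>
    rw [encode, size_node]
    simp only [List.length_cons, List.length_append, List.length_flatten, List.map_map,
      Function.comp_def, List.length_nil]
    rw [List.map_congr_left ih, List.sum_map_mul_left]
    omega

theorem encode_append_inj (t₁ : PlaneTree) :
    ∀ t₂ r₁ r₂, t₁.encode ++ r₁ = t₂.encode ++ r₂ → t₁ = t₂ ∧ r₁ = r₂ := by
  induction t₁ using induction with
  | node l₁ ih =>
    rintro ⟨l₂⟩ r₁ r₂ h
    simp only [encode, List.cons_append, List.cons.injEq, true_and, List.append_assoc,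
      List.nil_append] at h
    suffices l₁ = l₂ ∧ r₁ = r₂ from ⟨congrArg node this.1, this.2⟩
    induction l₁ generalizing l₂ with
    | nil =>
      cases l₂ with
      | nil => simpa using h
      | cons s₂ l₂ => cases s₂; simp [encode] at h
    | cons s₁ l₁ ihl =>
      cases l₂ with
      | nil => cases s₁; simp [encode] at h
      | cons s₂ l₂ =>
        simp only [List.map_cons, List.flatten_cons, List.append_assoc] at h
        obtain ⟨rfl, htail⟩ := ih s₁ List.mem_cons_self s₂ _ _ h
        obtain ⟨rfl, rfl⟩ := ihl (fun s hs => ih s (List.mem_cons_of_mem _ hs)) l₂ htail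
        exact ⟨rfl, rfl⟩

theorem encode_injective : Function.Injective encode := fun t₁ t₂ h =>
  (encode_append_inj t₁ t₂ [] [] (by rw [h])).1

def encodeVector (n : ℕ) (t : {t : PlaneTree // t.size = n}) : List.Vector Bool (2 * n) :=
  ⟨t.1.encode, by rw [length_encode, t.2]⟩

theorem encodeVector_injective (n : ℕ) : Function.Injective (encodeVector n) :=
  fun _ _ h => Subtype.ext (encode_injective (congrArg Subtype.val h))

instance (n : ℕ) : Finite {t : PlaneTree // t.size = n} :=
  Finite.of_injective _ (encodeVector_injective n)

theorem card_size_eq_le_four_pow (n : ℕ) : Nat.card {t : PlaneTree // t.size = n} ≤ 4 ^ n := by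
  calc Nat.card {t : PlaneTree // t.size = n} ≤ Nat.card (List.Vector Bool (2 * n)) :=
        Nat.card_le_card_of_injective _ (encodeVector_injective n)
    _ = 4 ^ n := by simp [pow_mul]

end PlaneTree

theorem treeWeight_node (w : ℕ → ℝ) (l : List PlaneTree) :
    treeWeight w (.node l) = w l.length * (l.map (treeWeight w)).prod := by
  simp [treeWeight]

theorem treeWeight_eq_prod_degrees (w : ℕ → ℝ) (t : PlaneTree) :
    treeWeight w t = (t.degrees.map w).prod := by
  induction t using PlaneTree.induction with
  | node l ih =>
    rw [treeWeight_node, PlaneTree.degrees, Multiset.map_cons, Multiset.prod_cons,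
      List.map_congr_left ih]
    clear ih
    congr 1
    induction l with
    | nil => simp
    | cons s l ihl => simp [ihl, Multiset.prod_add]

theorem Multiset.exists_mem_Icc_le_count {D : Multiset ℕ} (hsum : D.sum ≤ card D) {ε : ℝ}
    {C : ℕ} (hC : 2 ≤ ε * C) (hzero : (D.count 0 : ℝ) < (1 - ε) * card D) :
    ∃ d ∈ Finset.Icc 1 C, ε * card D ≤ 2 * C * D.count d := by
  classical
  set L := D.filter (· ∈ Finset.Icc 1 C)
  set H := D.filter (C < ·)
  have hpartition : ∀ D : Multiset ℕ,
      D.count 0 + card (D.filter (· ∈ Finset.Icc 1 C)) + card (D.filter (C < ·)) = card D := by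
    intro D
    induction D using Multiset.induction_on with
    | empty => simp
    | cons a D ih =>
      simp only [Multiset.count_cons, Multiset.filter_cons, Multiset.card_cons]
      split_ifs <;> simp_all <;> omega
  have hH : (C + 1) * card H ≤ card D := by
    calc (C + 1) * card H = card H • (C + 1) := by rw [smul_eq_mul, mul_comm]
      _ ≤ H.sum := Multiset.card_nsmul_le_sum fun x hx => (Multiset.mem_filter.1 hx).2
      _ ≤ D.sum := by
        rw [← Multiset.filter_add_not (C < ·) D, Multiset.sum_add]; exact le_self_add
      _ ≤ card D := hsum
  have hL : ∑ d ∈ Finset.Icc 1 C, D.count d = card L := by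
    rw [← Multiset.sum_count_eq_card fun a ha => (Multiset.mem_filter.1 ha).2]
    exact Finset.sum_congr rfl fun d hd => (Multiset.count_filter_of_pos hd).symm
  have hC1 : 1 ≤ C := Nat.one_le_iff_ne_zero.2 (by rintro rfl; norm_num at hC)
  obtain ⟨d, hd, hLd⟩ : ∃ d ∈ Finset.Icc 1 C, card L ≤ C * D.count d := by
    refine Finset.exists_le_of_sum_le ⟨1, Finset.mem_Icc.2 ⟨le_rfl, hC1⟩⟩ ?_
    rw [← Finset.mul_sum, hL, Finset.sum_const, Nat.card_Icc, smul_eq_mul, Nat.add_sub_cancel]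
  refine ⟨d, hd, ?_⟩
  have hLd' : (card L : ℝ) ≤ C * D.count d := by exact_mod_cast hLd
  have hH' : ((C : ℝ) + 1) * card H ≤ card D := by exact_mod_cast hH
  have hpart : (D.count 0 : ℝ) + card L + card H = card D := by exact_mod_cast hpartition D
  have hε : 0 < ε := pos_of_mul_pos_left (by linarith) (Nat.cast_nonneg C)
  nlinarith [(Nat.cast_nonneg (card H) : (0 : ℝ) ≤ card H)]

theorem Multiset.exists_replicate_le_of_count_zero_lt {D : Multiset ℕ} (hsum : D.sum ≤ card D)
    {ε : ℝ} {C J K : ℕ} (hC : 2 ≤ ε * C) (hJ : 4 * C ≤ ε * J) (hK : 0 < K)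
    (hn : 4 * C * K ≤ ε * card D) (hzero : (D.count 0 : ℝ) < (1 - ε) * card D) :
    ∃ d ∈ Finset.Icc 1 C, ∃ r, replicate (r * K) d ≤ D ∧ card D ≤ J * (r * K) := by
  classical
  obtain ⟨d, hd, hcount⟩ := exists_mem_Icc_le_count hsum hC hzero
  set r := D.count d / K
  refine ⟨d, hd, r, le_count_iff_replicate_le.1 (Nat.div_mul_le_self _ _), ?_⟩
  have hlt : (D.count d : ℝ) ≤ r * K + K := by exact_mod_cast (Nat.lt_div_mul_add hK).le
  have hε : 0 < ε := pos_of_mul_pos_left (by linarith) (Nat.cast_nonneg C)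
  have hblock : ε * card D ≤ ε * (J * (r * K)) := by
    have : (4 * C : ℝ) * (r * K) ≤ ε * J * (r * K) := by gcongr
    nlinarith [(Nat.cast_nonneg C : (0 : ℝ) ≤ C)]
  exact_mod_cast le_of_mul_le_mul_left hblock hε

section Weights

variable {w : ℕ → ℝ}

theorem prod_map_le_Zn (hpos : ∀ k, 0 ≤ w k) {D : Multiset ℕ}
    (hD : D.sum + 1 = Multiset.card D) : (D.map w).prod ≤ Zn w (Multiset.card D) := by
  obtain ⟨t, rfl⟩ := PlaneTree.exists_degrees_eq D hD
  rw [← treeWeight_eq_prod_degrees, PlaneTree.card_degrees]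
  exact Summable.of_finite.le_tsum (f := fun s : {s : PlaneTree // s.size = t.size} =>
    treeWeight w s) ⟨t, rfl⟩ fun s _ => by
      rw [treeWeight_eq_prod_degrees]; exact Multiset.prod_map_nonneg fun k _ => hpos k

/-- Trading `r K` vertices of degree `d` for `r d` vertices of degree `K` and `r (K - d)` leaves
preserves the numbers of vertices and of edges, so the result is again the degree multiset of a
tree of the same size. -/
theorem mul_prod_map_le_Zn_of_exchange (hpos : ∀ k, 0 ≤ w k) {D : Multiset ℕ}
    (hD : D.sum + 1 = Multiset.card D) {d K r : ℕ} (hdK : d ≤ K)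
    (hle : Multiset.replicate (r * K) d ≤ D) {X : ℝ}
    (hX : X * w d ^ (r * K) ≤ w K ^ (r * d) * w 0 ^ (r * (K - d))) :
    X * (D.map w).prod ≤ Zn w (Multiset.card D) := by
  obtain ⟨E, rfl⟩ := Multiset.le_iff_exists_add.1 hle
  set D' := E + Multiset.replicate (r * d) K + Multiset.replicate (r * (K - d)) 0
  have hcard : Multiset.card D' = Multiset.card (Multiset.replicate (r * K) d + E) := by
    simp only [D', Multiset.card_add, Multiset.card_replicate]
    rw [add_assoc, ← Nat.mul_add, Nat.add_sub_cancel' hdK, add_comm]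
  have hsum : D'.sum = (Multiset.replicate (r * K) d + E).sum := by
    simp only [D', Multiset.sum_add, Multiset.sum_replicate, smul_eq_mul]; ring
  have hE : 0 ≤ (E.map w).prod := Multiset.prod_map_nonneg fun k _ => hpos k
  calc X * ((Multiset.replicate (r * K) d + E).map w).prod
      = (E.map w).prod * (X * w d ^ (r * K)) := by
        simp only [Multiset.map_add, Multiset.prod_add, Multiset.map_replicate,
          Multiset.prod_replicate]; ring
    _ ≤ (E.map w).prod * (w K ^ (r * d) * w 0 ^ (r * (K - d))) :=
        mul_le_mul_of_nonneg_left hX hE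
    _ = (D'.map w).prod := by
        simp only [D', Multiset.map_add, Multiset.prod_add, Multiset.map_replicate,
          Multiset.prod_replicate]; ring
    _ ≤ Zn w (Multiset.card D') := prod_map_le_Zn hpos (by rw [hsum, hcard, hD])
    _ = Zn w (Multiset.card (Multiset.replicate (r * K) d + E)) := by rw [hcard]

theorem sgProb_le_of_forall_pow_mul_le {n : ℕ} {E : Set PlaneTree} {Q : ℝ} (hZ : 0 < Zn w n)
    (hQ : 0 < Q) (h : ∀ t : PlaneTree, t.size = n → t ∈ E → Q ^ n * treeWeight w t ≤ Zn w n) :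
    sgProb w n E ≤ (4 / Q) ^ n := by
  set ι : {t : PlaneTree // t.size = n ∧ t ∈ E} → {t : PlaneTree // t.size = n} :=
    fun t => ⟨t.1, t.2.1⟩
  have hι : Function.Injective ι := fun a b hab => Subtype.ext (Subtype.mk.inj hab)
  have : Finite {t : PlaneTree // t.size = n ∧ t ∈ E} := Finite.of_injective ι hι
  have : Fintype {t : PlaneTree // t.size = n ∧ t ∈ E} := Fintype.ofFinite _
  have hcard : (Fintype.card {t : PlaneTree // t.size = n ∧ t ∈ E} : ℝ) ≤ 4 ^ n := by
    rw [← Nat.card_eq_fintype_card]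
    exact_mod_cast (Nat.card_le_card_of_injective ι hι).trans (PlaneTree.card_size_eq_le_four_pow n)
  have hQn : 0 < Q ^ n := pow_pos hQ n
  rw [sgProb, div_le_iff₀ hZ, tsum_fintype]
  calc ∑ t : {t : PlaneTree // t.size = n ∧ t ∈ E}, treeWeight w t
      ≤ Fintype.card {t : PlaneTree // t.size = n ∧ t ∈ E} * (Zn w n / Q ^ n) := by
        rw [← nsmul_eq_mul]
        exact Finset.sum_le_card_nsmul _ _ _ fun t _ =>
          (le_div_iff₀' hQn).2 (h t.1 t.2.1 t.2.2)
    _ ≤ 4 ^ n * (Zn w n / Q ^ n) := by gcongr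
    _ = (4 / Q) ^ n * Zn w n := by rw [div_pow]; ring

theorem le_sgRho_of_sgPhi_lt_top {t : ℝ≥0} (h : sgPhi w t < ⊤) : (t : ℝ≥0∞) ≤ sgRho w :=
  le_iSup₂_of_le t h le_rfl

theorem sgPhi_lt_top_of_summable {t : ℝ} (h : ∀ k, 0 ≤ w k * t ^ k)
    (hs : Summable fun k => w k * t ^ k) : sgPhi w t < ⊤ := by
  rw [sgPhi, ← ENNReal.ofReal_tsum_of_nonneg h hs]
  exact ENNReal.ofReal_lt_top

theorem frequently_pow_le_of_sgRho_eq_zero (hpos : ∀ k, 0 ≤ w k) (hrho : sgRho w = 0) {A : ℝ}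
    (hA : 0 < A) : ∃ᶠ K in atTop, A ^ K ≤ w K := by
  by_contra hcon
  rw [not_frequently] at hcon
  set t : ℝ≥0 := ⟨(2 * A)⁻¹, by positivity⟩
  have ht : (t : ℝ) = (2 * A)⁻¹ := rfl
  have hterm : ∀ k, 0 ≤ w k * (t : ℝ) ^ k := fun k => mul_nonneg (hpos k) (by positivity)
  have hsummable : Summable fun k => w k * (t : ℝ) ^ k := by
    refine Summable.of_norm_bounded_eventually_nat summable_geometric_two ?_
    filter_upwards [hcon] with k hk
    rw [Real.norm_of_nonneg (hterm k)]
    calc w k * (t : ℝ) ^ k ≤ A ^ k * (t : ℝ) ^ k :=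
          mul_le_mul_of_nonneg_right (not_le.1 hk).le (by positivity)
      _ = (1 / 2) ^ k := by rw [ht, ← mul_pow]; field_simp
  have hle := le_sgRho_of_sgPhi_lt_top (sgPhi_lt_top_of_summable hterm hsummable)
  rw [hrho, nonpos_iff_eq_zero, ENNReal.coe_eq_zero] at hle
  exact (NNReal.coe_pos.1 (by rw [ht]; positivity)).ne' hle

theorem pow_le_pow_mul_pow_of_pow_le {A β : ℝ} {d K : ℕ} (hA : 1 ≤ A) (hAK : A ^ K ≤ w K)
    (hβ : 0 ≤ β) (hβ1 : β ≤ 1) (hβw : β ≤ w 0) (hd : 1 ≤ d) (r : ℕ) :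
    (A * β) ^ (r * K) ≤ w K ^ (r * d) * w 0 ^ (r * (K - d)) := by
  have hwK : 1 ≤ w K := (one_le_pow₀ hA).trans hAK
  rw [mul_pow, pow_mul' A r K]
  gcongr
  · calc (A ^ K) ^ r ≤ w K ^ r := by gcongr
      _ ≤ w K ^ (r * d) := pow_le_pow_right₀ hwK (Nat.le_mul_of_pos_right r hd)
  · calc β ^ (r * K) ≤ β ^ (r * (K - d)) :=
          pow_le_pow_of_le_one hβ hβ1 (Nat.mul_le_mul_left r (Nat.sub_le K d))
      _ ≤ w 0 ^ (r * (K - d)) := by gcongr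

theorem pow_mul_treeWeight_le_Zn (hpos : ∀ k, 0 ≤ w k) {ε : ℝ} {C J K : ℕ}
    {Q W A β : ℝ} (hC : 2 ≤ ε * C) (hJ : 4 * C ≤ ε * J) (hQ : 1 ≤ Q) (hW : ∀ c ≤ C, w c ≤ W)
    (hAβ : Q ^ J * W ≤ A * β) (hA : 1 ≤ A) (hβ : 0 ≤ β) (hβ1 : β ≤ 1) (hβw : β ≤ w 0)
    (hCK : C < K) (hAK : A ^ K ≤ w K) {t : PlaneTree} (hn : 4 * C * K ≤ ε * t.size)
    (hbad : (t.degCount 0 : ℝ) < (1 - ε) * t.size) :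
    Q ^ t.size * treeWeight w t ≤ Zn w t.size := by
  have hsum := t.sum_degrees
  rw [← t.card_degrees] at hn hbad hsum ⊢
  rw [← t.count_degrees] at hbad
  obtain ⟨d, hd, r, hle, hnr⟩ := Multiset.exists_replicate_le_of_count_zero_lt (by omega) hC hJ
    (by omega) hn hbad
  rw [Finset.mem_Icc] at hd
  rw [treeWeight_eq_prod_degrees]
  refine mul_prod_map_le_Zn_of_exchange hpos hsum (hd.2.trans hCK.le) hle ?_
  calc Q ^ Multiset.card t.degrees * w d ^ (r * K) ≤ (Q ^ J) ^ (r * K) * W ^ (r * K) := by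
        rw [← pow_mul]
        exact mul_le_mul (pow_le_pow_right₀ hQ hnr) (pow_le_pow_left₀ (hpos d) (hW d hd.2) _)
          (pow_nonneg (hpos d) _) (by positivity)
    _ ≤ (A * β) ^ (r * K) := by
        rw [← mul_pow]
        have hW0 : 0 ≤ W := (hpos 0).trans (hW 0 (Nat.zero_le C))
        exact pow_le_pow_left₀ (by positivity) hAβ _
    _ ≤ w K ^ (r * d) * w 0 ^ (r * (K - d)) :=
        pow_le_pow_mul_pow_of_pow_le hA hAK hβ hβ1 hβw hd.1 r

theorem exists_forall_pow_mul_treeWeight_le_Zn (hpos : ∀ k, 0 ≤ w k)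
    (hw0 : 0 < w 0) (hrho : sgRho w = 0) {Q : ℝ} (hQ : 1 ≤ Q) {ε : ℝ} (hε : 0 < ε) :
    ∃ N : ℕ, ∀ t : PlaneTree, N ≤ t.size → (t.degCount 0 : ℝ) < (1 - ε) * t.size →
      Q ^ t.size * treeWeight w t ≤ Zn w t.size := by
  have hceil : ∀ a : ℝ, ∃ m : ℕ, a ≤ ε * m := fun a =>
    ⟨⌈a / ε⌉₊, (div_le_iff₀' hε).1 (Nat.le_ceil _)⟩
  obtain ⟨C, hC⟩ := hceil 2
  obtain ⟨J, hJ⟩ := hceil (4 * C)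
  set W := ∑ c ∈ Finset.range (C + 1), w c
  have hW : ∀ c ≤ C, w c ≤ W := fun c hc =>
    Finset.single_le_sum (fun i _ => hpos i) (Finset.mem_range.2 (Nat.lt_succ_of_le hc))
  set β := min 1 (w 0)
  have hβ : 0 < β := lt_min one_pos hw0
  -- each exchanged vertex of degree `d ≤ C` gains a factor `A β / w_d ≥ Q^J`, and at least
  -- `n / J` vertices are exchanged
  set A := Q ^ J * W / β
  have hA : 1 ≤ A := by
    rw [one_le_div hβ]
    calc β ≤ W := (min_le_right _ _).trans (hW 0 (Nat.zero_le C))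
      _ ≤ Q ^ J * W := le_mul_of_one_le_left ((hpos 0).trans (hW 0 (Nat.zero_le C)))
          (one_le_pow₀ hQ)
  obtain ⟨K, hCK, hAK⟩ := (frequently_pow_le_of_sgRho_eq_zero hpos hrho
    (zero_lt_one.trans_le hA)).forall_exists_of_atTop (C + 1)
  obtain ⟨N, hN⟩ := hceil (4 * C * K)
  refine ⟨N, fun t hNt hbad => pow_mul_treeWeight_le_Zn hpos hC hJ hQ hW
    (div_mul_cancel₀ _ hβ.ne').ge hA hβ.le (min_le_left _ _) (min_le_right _ _) hCK hAK ?_ hbad⟩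
  exact hN.trans (by gcongr)

end Weights

theorem simply_generated_zero_radius_many_leaves_general (w : ℕ → ℝ) (hpos : ∀ k, 0 ≤ w k)
    (hw0 : 0 < w 0) (hrho : sgRho w = 0) :
    ∀ ε : ℝ, 0 < ε → ∃ c : ℝ, 0 < c ∧ ∃ N : ℕ, ∀ n ≥ N, 0 < Zn w n →
      sgProb w n {t : PlaneTree | (t.degCount 0 : ℝ) < (1 - ε) * n} ≤
        Real.exp (-c * n) := by
  intro ε hε
  have hQ : 1 ≤ 4 * Real.exp 1 := by linarith [Real.add_one_le_exp 1]
  obtain ⟨N, hN⟩ := exists_forall_pow_mul_treeWeight_le_Zn hpos hw0 hrho hQ hε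
  refine ⟨1, one_pos, N, fun n hn hZ => ?_⟩
  calc sgProb w n {t : PlaneTree | (t.degCount 0 : ℝ) < (1 - ε) * n}
      ≤ (4 / (4 * Real.exp 1)) ^ n :=
        sgProb_le_of_forall_pow_mul_le hZ (by positivity) fun t ht hbad => by
          subst ht; exact hN t hn hbad
    _ = Real.exp (-1 * n) := by
        rw [div_mul_cancel_left₀ four_ne_zero, ← Real.exp_neg, ← Real.exp_nat_mul]
        ring_nf

/-- **Theorem (zero radius of convergence).** If the weight sequence `w` (with `w_0 > 0`
and `w_k > 0` for some `k ≥ 2`) has generating function of radius of convergence `0`,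
then for every `ε > 0`, with very high probability the simply generated tree `𝒯_n` has
at least `(1 − ε) n` leaves. -/
theorem simply_generated_zero_radius_many_leaves (w : ℕ → ℝ) (hpos : ∀ k, 0 ≤ w k)
    (hw0 : 0 < w 0) (hk : ∃ k, 2 ≤ k ∧ 0 < w k) (hrho : sgRho w = 0) :
    ∀ ε : ℝ, 0 < ε → ∃ c : ℝ, 0 < c ∧ ∃ N : ℕ, ∀ n ≥ N, 0 < Zn w n →
      sgProb w n {t : PlaneTree | (t.degCount 0 : ℝ) < (1 - ε) * n} ≤
        Real.exp (-c * n) :=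
  simply_generated_zero_radius_many_leaves_general w hpos hw0 hrho
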